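/- arXiv:1711.03247 — 2 statements merged into one kernel-verified Lean document; each statement's English description precedes it below -/
import Mathlib

section
/- Let f, g: ℝ^d → ℝ, with g being ρ-weakly convex, and suppose there exist x̄ ∈ ℝ^d and δ > 0 such that |f(x) - g(x)| ≤ δ‖x - x̄‖‖x + x̄‖ for all x. Then for any stationary point x of g (0 ∈ ∂g(x)), there exists x̂ with ‖x - x̂‖ ≤ √(4δ/(ρ+2δ))·√(‖x-x̄‖‖x+x̄‖) and dist(0, ∂f(x̂)) ≤ (δ + 2√(δ(ρ+2δ)))·(‖x-x̄‖ + ‖x+x̄‖). -/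
/-!
Since `0 ∈ ∂g(x)`, weak convexity gives `g ≥ g x - ρ/2 ‖· - x‖²`, hence
`f ≥ g x - ρ/2 ‖· - x‖² - δ h` with `h y = ‖y - x̄‖‖y + x̄‖`. Replace `h` by its smooth majorant
`h_ε = √(h² + ε²) ≤ h + ε` and minimize the coercive lower semicontinuous function
`f + δ h_ε + (ρ + δ)‖· - x‖²`. Comparing its value at a minimizer `z_ε` with its value at `x` gives
`(ρ + 2δ)‖z_ε - x‖² ≤ 4δ h x + 2δε`, and first-order optimality puts minus the gradient of the
smooth penalty, of norm at most `δ(‖z_ε - x̄‖ + ‖z_ε + x̄‖) + 2(ρ + δ)‖z_ε - x‖`, into the Fréchet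
subdifferential of `f` at `z_ε`. Along a subsequence `ε → 0` the points and subgradients converge;
minimality of `z_ε` also forces `f z_ε → f ẑ`, so the limit is a limiting subgradient, and both
bounds pass to the limit. The constants come from `h x ≤ (‖x - x̄‖ + ‖x + x̄‖)² / 4`.
-/

open scoped InnerProductSpace

/-- The Fréchet subdifferential of `f` at `x`. -/
def frechetSubdiff {d : ℕ} (f : EuclideanSpace ℝ (Fin d) → ℝ) (x : EuclideanSpace ℝ (Fin d)) :
    Set (EuclideanSpace ℝ (Fin d)) :=
  {v | ∀ ε > (0 : ℝ), ∃ δ > (0 : ℝ), ∀ y, ‖y - x‖ < δ →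
      f y ≥ f x + ⟪v, y - x⟫_ℝ - ε * ‖y - x‖}

/-- The limiting subdifferential of `f` at `x`. -/
def limitingSubdiff {d : ℕ} (f : EuclideanSpace ℝ (Fin d) → ℝ) (x : EuclideanSpace ℝ (Fin d)) :
    Set (EuclideanSpace ℝ (Fin d)) :=
  {v | ∃ xs vs : ℕ → EuclideanSpace ℝ (Fin d),
      (∀ n, vs n ∈ frechetSubdiff f (xs n)) ∧
      Filter.Tendsto xs Filter.atTop (nhds x) ∧
      Filter.Tendsto (fun n => f (xs n)) Filter.atTop (nhds (f x)) ∧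
      Filter.Tendsto vs Filter.atTop (nhds v)}

open Filter Topology

theorem le_sqrt_div_of_mul_sq_le {t c q : ℝ} (hc : 0 < c) (h : c * t ^ 2 ≤ q) : t ≤ √(q / c) :=
  Real.le_sqrt_of_sq_le ((le_div_iff₀ hc).2 (by linarith))

theorem two_mul_mul_le_of_mul_sq_le {c δ t a b : ℝ} (hc : 0 < c) (hδ : 0 ≤ δ)
    (ha : 0 ≤ a) (hb : 0 ≤ b) (h : c * t ^ 2 ≤ 4 * δ * (a * b)) :
    2 * c * t ≤ 2 * √(δ * c) * (a + b) := by
  have hs := Real.sq_sqrt (mul_nonneg hδ hc.le)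
  have hsq : (c * t) ^ 2 ≤ (√(δ * c) * (a + b)) ^ 2 := by
    rw [mul_pow, mul_pow, hs]
    nlinarith [sq_nonneg (a - b)]
  linarith [(abs_le_of_sq_le_sq' hsq (by positivity)).2]

theorem norm_sub_add_norm_add_le {E : Type*} [SeminormedAddCommGroup E] (x z a : E) :
    ‖z - a‖ + ‖z + a‖ ≤ ‖x - a‖ + ‖x + a‖ + 2 * ‖z - x‖ := by
  have h₁ : ‖z - a‖ ≤ ‖z - x‖ + ‖x - a‖ := norm_sub_le_norm_sub_add_norm_sub z x a
  have h₂ : ‖z + a‖ ≤ ‖z - x‖ + ‖x + a‖ := by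
    rw [show z + a = (z - x) + (x + a) by abel]
    exact norm_add_le _ _
  linarith

theorem LowerSemicontinuous.exists_forall_le_of_tendsto_cocompact {X β : Type*}
    [TopologicalSpace X] [Nonempty X] [LinearOrder β] {F : X → β}
    (hF : LowerSemicontinuous F) (hcoer : Tendsto F (cocompact X) atTop) :
    ∃ z, ∀ y, F z ≤ F y := by
  obtain ⟨x₀⟩ := ‹Nonempty X›
  obtain ⟨K, hK, hKc⟩ := mem_cocompact.1 (hcoer.eventually (eventually_ge_atTop (F x₀)))
  obtain ⟨z, -, hz⟩ := LowerSemicontinuousOn.exists_isMinOn (Set.insert_nonempty x₀ K)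
    (hK.insert x₀) (hF.lowerSemicontinuousOn _)
  refine ⟨z, fun y => ?_⟩
  by_cases hy : y ∈ insert x₀ K
  · exact hz hy
  · exact (hz (Set.mem_insert x₀ K)).trans (hKc fun hyK => hy (Set.mem_insert_of_mem x₀ hyK))

theorem LowerSemicontinuous.tendsto_of_le_add_perturbation {X T : Type*} [TopologicalSpace X]
    [TopologicalSpace T] {f : X → ℝ} (hf : LowerSemicontinuous f) {P : T × X → ℝ}
    (hP : Continuous P) {z : ℕ → X} {zs : X} {t : ℕ → T} {t₀ : T}
    (hz : Tendsto z atTop (𝓝 zs)) (ht : Tendsto t atTop (𝓝 t₀))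
    (hle : ∀ n, f (z n) + P (t n, z n) ≤ f zs + P (t n, zs)) :
    Tendsto (fun n => f (z n)) atTop (𝓝 (f zs)) := by
  have hgap : Tendsto (fun n => P (t n, zs) - P (t n, z n)) atTop (𝓝 0) := by
    simpa using ((hP.tendsto (t₀, zs)).comp (ht.prodMk_nhds tendsto_const_nhds)).sub
      ((hP.tendsto (t₀, zs)).comp (ht.prodMk_nhds hz))
  have hlim : Tendsto (fun n => f zs + (P (t n, zs) - P (t n, z n))) atTop (𝓝 (f zs)) := by
    simpa using (tendsto_const_nhds (x := f zs)).add hgap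
  refine tendsto_order.2 ⟨fun c hc => hz.eventually (hf zs c hc), fun c hc => ?_⟩
  filter_upwards [hlim.eventually_lt_const hc] with n hn
  linarith [hle n]

theorem neg_mem_frechetSubdiff_of_isLocalMin_add {d : ℕ} {f φ : EuclideanSpace ℝ (Fin d) → ℝ}
    {z G : EuclideanSpace ℝ (Fin d)} (hmin : IsLocalMin (fun y => f y + φ y) z)
    (hφ : HasFDerivAt φ (innerSL ℝ G) z) : -G ∈ frechetSubdiff f z := by
  intro ε hε
  have hlin : ∀ᶠ y in 𝓝 z, |φ y - φ z - ⟪G, y - z⟫_ℝ| ≤ ε * ‖y - z‖ := by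
    simpa using hφ.isLittleO.def hε
  obtain ⟨r, hr, hball⟩ := Metric.eventually_nhds_iff.1 (hmin.and hlin)
  refine ⟨r, hr, fun y hy => ?_⟩
  obtain ⟨hfy, hφy⟩ := hball (by rwa [dist_eq_norm])
  rw [inner_neg_left]
  linarith [(abs_le.1 hφy).2]

section SmoothNormProd

variable {E : Type*} [NormedAddCommGroup E]

noncomputable def smoothNormProd (a : E) (ε : ℝ) (y : E) : ℝ :=
  √(‖y - a‖ ^ 2 * ‖y + a‖ ^ 2 + ε ^ 2)

variable (a : E) {ε : ℝ} (y : E)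

theorem norm_sub_mul_norm_add_le_smoothNormProd : ‖y - a‖ * ‖y + a‖ ≤ smoothNormProd a ε y :=
  Real.le_sqrt_of_sq_le (by nlinarith [sq_nonneg ε])

theorem smoothNormProd_le (hε : 0 ≤ ε) : smoothNormProd a ε y ≤ ‖y - a‖ * ‖y + a‖ + ε :=
  Real.sqrt_le_iff.2
    ⟨by positivity, by nlinarith [mul_nonneg (norm_nonneg (y - a)) (norm_nonneg (y + a))]⟩

@[fun_prop]
theorem Continuous.smoothNormProd {X : Type*} [TopologicalSpace X] {ε : X → ℝ} {y : X → E}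
    (hε : Continuous ε) (hy : Continuous y) : Continuous fun t => smoothNormProd a (ε t) (y t) := by
  unfold _root_.smoothNormProd; fun_prop

theorem exists_hasFDerivAt_smoothNormProd [InnerProductSpace ℝ E] (hε : ε ≠ 0) (z : E) :
    ∃ G, HasFDerivAt (smoothNormProd a ε) (innerSL ℝ G) z ∧ ‖G‖ ≤ ‖z - a‖ + ‖z + a‖ := by
  have hs : 0 < smoothNormProd a ε z := Real.sqrt_pos.2 (by positivity)
  refine ⟨(smoothNormProd a ε z)⁻¹ • (‖z + a‖ ^ 2 • (z - a) + ‖z - a‖ ^ 2 • (z + a)), ?_, ?_⟩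
  · have h := ((((hasFDerivAt_id z).sub_const a).norm_sq.mul
      ((hasFDerivAt_id z).add_const a).norm_sq).add_const (ε ^ 2)).sqrt
      (by simp only [Pi.mul_apply, id]; positivity)
    refine h.congr_fderiv (ContinuousLinearMap.ext fun w => ?_)
    simp only [id_eq, Pi.mul_apply, one_div, mul_inv_rev, map_add, ContinuousLinearMap.comp_id,
      smul_add, map_sub, add_apply, smul_apply, coe_innerSL_apply, nsmul_eq_mul,
      Nat.cast_ofNat, smul_eq_mul, sub_apply, smoothNormProd, map_smul]
    ring
  · have hprod := norm_sub_mul_norm_add_le_smoothNormProd a (ε := ε) z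
    rw [norm_smul, norm_inv, Real.norm_of_nonneg hs.le, inv_mul_le_iff₀ hs]
    calc ‖‖z + a‖ ^ 2 • (z - a) + ‖z - a‖ ^ 2 • (z + a)‖
        ≤ ‖z + a‖ ^ 2 * ‖z - a‖ + ‖z - a‖ ^ 2 * ‖z + a‖ := by
          refine (norm_add_le _ _).trans_eq ?_
          rw [norm_smul, norm_smul, Real.norm_of_nonneg (by positivity),
            Real.norm_of_nonneg (by positivity)]
      _ = (‖z - a‖ * ‖z + a‖) * (‖z - a‖ + ‖z + a‖) := by ring
      _ ≤ smoothNormProd a ε z * (‖z - a‖ + ‖z + a‖) := by gcongr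

end SmoothNormProd

section Penalization

variable {d : ℕ} {f g : EuclideanSpace ℝ (Fin d) → ℝ} {ρ δ ε c : ℝ}
  {a x z : EuclideanSpace ℝ (Fin d)}

theorem exists_mem_frechetSubdiff_of_isLocalMin_penalty (hδ : 0 ≤ δ) (hc : 0 ≤ c) (hε : ε ≠ 0)
    (hmin : IsLocalMin (fun y => f y + (δ * smoothNormProd a ε y + c * ‖y - x‖ ^ 2)) z) :
    ∃ v ∈ frechetSubdiff f z, ‖v‖ ≤ δ * (‖z - a‖ + ‖z + a‖) + 2 * c * ‖z - x‖ := by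
  obtain ⟨G, hG, hGnorm⟩ := exists_hasFDerivAt_smoothNormProd a hε z
  have hφ : HasFDerivAt (fun y => δ * smoothNormProd a ε y + c * ‖y - x‖ ^ 2)
      (innerSL ℝ (δ • G + (2 * c) • (z - x))) z := by
    refine ((hG.const_mul δ).add (((hasFDerivAt_id z).sub_const x).norm_sq.const_mul c))
      |>.congr_fderiv (ContinuousLinearMap.ext fun w => ?_)
    simp only [id_eq, map_sub, ContinuousLinearMap.comp_id, add_apply, smul_apply,
      coe_innerSL_apply, smul_eq_mul, sub_apply, nsmul_eq_mul, Nat.cast_ofNat, map_add, map_smul,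
      add_right_inj]
    ring
  refine ⟨_, neg_mem_frechetSubdiff_of_isLocalMin_add hmin hφ, ?_⟩
  calc ‖-(δ • G + (2 * c) • (z - x))‖ ≤ ‖δ • G‖ + ‖(2 * c) • (z - x)‖ := by
        rw [norm_neg]; exact norm_add_le _ _
    _ = δ * ‖G‖ + 2 * c * ‖z - x‖ := by
        rw [norm_smul, norm_smul, Real.norm_of_nonneg hδ, Real.norm_of_nonneg (by positivity)]
    _ ≤ δ * (‖z - a‖ + ‖z + a‖) + 2 * c * ‖z - x‖ := by gcongr

variable {xb : EuclideanSpace ℝ (Fin d)}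

theorem exists_minimizer_penalty (hf : LowerSemicontinuous f) (hρ : 0 ≤ ρ) (hδ : 0 < δ)
    (hε : 0 < ε) (hgx : ∀ y, g x - ρ / 2 * ‖y - x‖ ^ 2 ≤ g y)
    (happrox : ∀ y, |f y - g y| ≤ δ * ‖y - xb‖ * ‖y + xb‖) :
    ∃ z, (∀ y, f z + (δ * smoothNormProd xb ε z + (ρ + δ) * ‖z - x‖ ^ 2) ≤
        f y + (δ * smoothNormProd xb ε y + (ρ + δ) * ‖y - x‖ ^ 2)) ∧
      (ρ + 2 * δ) * ‖z - x‖ ^ 2 ≤ 4 * δ * (‖x - xb‖ * ‖x + xb‖) + 2 * δ * ε := by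
  set F := fun y => f y + (δ * smoothNormProd xb ε y + (ρ + δ) * ‖y - x‖ ^ 2)
  have hlow : ∀ y, g x + (ρ / 2 + δ) * ‖y - x‖ ^ 2 ≤ F y := fun y => by
    have hh := mul_le_mul_of_nonneg_left
      (norm_sub_mul_norm_add_le_smoothNormProd xb (ε := ε) y) hδ.le
    linarith [(abs_le.1 (happrox y)).1, hgx y, mul_assoc δ ‖y - xb‖ ‖y + xb‖]
  have hFx : F x ≤ g x + 2 * δ * (‖x - xb‖ * ‖x + xb‖) + δ * ε := by
    have hh := mul_le_mul_of_nonneg_left (smoothNormProd_le xb x hε.le) hδ.le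
    simp only [F, sub_self, norm_zero]
    linarith [(abs_le.1 (happrox x)).2, mul_assoc δ ‖x - xb‖ ‖x + xb‖]
  have hF : LowerSemicontinuous F :=
    hf.add (by fun_prop : Continuous _).lowerSemicontinuous
  have hcoer : Tendsto F (cocompact _) atTop := by
    refine tendsto_atTop_mono hlow (tendsto_atTop_add_const_left _ _
      (Tendsto.const_mul_atTop (by positivity) ((tendsto_pow_atTop two_ne_zero).comp ?_)))
    simpa only [dist_eq_norm] using tendsto_dist_right_cocompact_atTop x
  obtain ⟨z, hz⟩ := hF.exists_forall_le_of_tendsto_cocompact hcoer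
  refine ⟨z, hz, ?_⟩
  linarith [hlow z, hz x]

theorem exists_mem_frechetSubdiff_near (hf : LowerSemicontinuous f) (hρ : 0 ≤ ρ) (hδ : 0 < δ)
    (hε : 0 < ε) (hgx : ∀ y, g x - ρ / 2 * ‖y - x‖ ^ 2 ≤ g y)
    (happrox : ∀ y, |f y - g y| ≤ δ * ‖y - xb‖ * ‖y + xb‖) :
    ∃ z, (∀ y, f z + (δ * smoothNormProd xb ε z + (ρ + δ) * ‖z - x‖ ^ 2) ≤
        f y + (δ * smoothNormProd xb ε y + (ρ + δ) * ‖y - x‖ ^ 2)) ∧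
      (ρ + 2 * δ) * ‖z - x‖ ^ 2 ≤ 4 * δ * (‖x - xb‖ * ‖x + xb‖) + 2 * δ * ε ∧
      ∃ v ∈ frechetSubdiff f z,
        ‖v‖ ≤ δ * (‖x - xb‖ + ‖x + xb‖) + 2 * (ρ + 2 * δ) * ‖z - x‖ := by
  obtain ⟨z, hzmin, hzx⟩ := exists_minimizer_penalty hf hρ hδ hε hgx happrox
  obtain ⟨v, hv, hvz⟩ := exists_mem_frechetSubdiff_of_isLocalMin_penalty hδ.le
    (by linarith : 0 ≤ ρ + δ) hε.ne' (Eventually.of_forall hzmin)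
  refine ⟨z, hzmin, hzx, v, hv, ?_⟩
  nlinarith [norm_sub_add_norm_add_le x z xb]

theorem exists_mem_limitingSubdiff_near (hf : LowerSemicontinuous f) (hρ : 0 ≤ ρ) (hδ : 0 < δ)
    (hgx : ∀ y, g x - ρ / 2 * ‖y - x‖ ^ 2 ≤ g y)
    (happrox : ∀ y, |f y - g y| ≤ δ * ‖y - xb‖ * ‖y + xb‖) :
    ∃ zs, (ρ + 2 * δ) * ‖zs - x‖ ^ 2 ≤ 4 * δ * (‖x - xb‖ * ‖x + xb‖) ∧
      ∃ vs ∈ limitingSubdiff f zs,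
        ‖vs‖ ≤ δ * (‖x - xb‖ + ‖x + xb‖) + 2 * (ρ + 2 * δ) * ‖zs - x‖ := by
  have hρδ : 0 < ρ + 2 * δ := by linarith
  set ε : ℕ → ℝ := fun n => 1 / ((n : ℝ) + 1)
  have hε_pos (n : ℕ) : 0 < ε n := Nat.one_div_pos_of_nat
  have hε_le (n : ℕ) : ε n ≤ 1 := by simpa [ε] using Nat.one_div_le_one_div (α := ℝ) n.zero_le
  choose z hzmin hzx v hvmem hvx using
    fun n => exists_mem_frechetSubdiff_near hf hρ hδ (hε_pos n) hgx happrox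
  set R := √((4 * δ * (‖x - xb‖ * ‖x + xb‖) + 2 * δ) / (ρ + 2 * δ))
  have hzR (n : ℕ) : ‖z n - x‖ ≤ R :=
    le_sqrt_div_of_mul_sq_le hρδ ((hzx n).trans (by nlinarith [hε_le n]))
  obtain ⟨⟨zs, vs⟩, -, φ, hφ, hlim⟩ := tendsto_subseq_of_bounded
    (Metric.isBounded_closedBall.prod Metric.isBounded_closedBall) (x := fun n => (z n, v n))
    (s := Metric.closedBall x R ×ˢ
      Metric.closedBall 0 (δ * (‖x - xb‖ + ‖x + xb‖) + 2 * (ρ + 2 * δ) * R))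
    fun n => Set.mk_mem_prod (mem_closedBall_iff_norm.2 (hzR n)) (mem_closedBall_zero_iff.2
      ((hvx n).trans (by gcongr; exact hzR n)))
  have hz : Tendsto (fun n => z (φ n)) atTop (𝓝 zs) := (continuous_fst.tendsto _).comp hlim
  have hv : Tendsto (fun n => v (φ n)) atTop (𝓝 vs) := (continuous_snd.tendsto _).comp hlim
  have hεφ : Tendsto (fun n => ε (φ n)) atTop (𝓝 0) :=
    tendsto_one_div_add_atTop_nhds_zero_nat.comp hφ.tendsto_atTop
  have hfz : Tendsto (fun n => f (z (φ n))) atTop (𝓝 (f zs)) :=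
    hf.tendsto_of_le_add_perturbation
      (P := fun p => δ * smoothNormProd xb p.1 p.2 + (ρ + δ) * ‖p.2 - x‖ ^ 2)
      (by fun_prop) hz hεφ fun n => hzmin (φ n) zs
  have hzsx : Tendsto (fun n => ‖z (φ n) - x‖) atTop (𝓝 ‖zs - x‖) := (hz.sub_const x).norm
  refine ⟨zs, ?_, vs, ⟨_, _, fun n => hvmem (φ n), hz, hfz, hv⟩, ?_⟩
  · refine le_of_tendsto_of_tendsto' (tendsto_const_nhds.mul (hzsx.pow 2)) ?_ fun n => hzx (φ n)
    simpa using tendsto_const_nhds.add (tendsto_const_nhds.mul hεφ)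
  · exact le_of_tendsto_of_tendsto' hv.norm (tendsto_const_nhds.add
      (tendsto_const_nhds.mul hzsx)) fun n => hvx (φ n)

end Penalization

theorem approximate_stationarity_transfer_general
    {d : ℕ} (f g : EuclideanSpace ℝ (Fin d) → ℝ)
    (hf : LowerSemicontinuous f)
    (ρ δ : ℝ) (hρ : 0 ≤ ρ) (hδ : 0 < δ)
    (hwc : ∀ x y v, v ∈ limitingSubdiff g x →
      g y ≥ g x + ⟪v, y - x⟫_ℝ - ρ / 2 * ‖y - x‖ ^ 2)
    (xb : EuclideanSpace ℝ (Fin d))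
    (happrox : ∀ y, |f y - g y| ≤ δ * ‖y - xb‖ * ‖y + xb‖)
    (x : EuclideanSpace ℝ (Fin d))
    (hstat : (0 : EuclideanSpace ℝ (Fin d)) ∈ limitingSubdiff g x) :
    ∃ xh : EuclideanSpace ℝ (Fin d),
      ‖x - xh‖ ≤ Real.sqrt (4 * δ / (ρ + 2 * δ)) * Real.sqrt (‖x - xb‖ * ‖x + xb‖) ∧
      Metric.infDist 0 (limitingSubdiff f xh) ≤
        (δ + 2 * Real.sqrt (δ * (ρ + 2 * δ))) * (‖x - xb‖ + ‖x + xb‖) := by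
  have hρδ : 0 < ρ + 2 * δ := by linarith
  have hgx (y : EuclideanSpace ℝ (Fin d)) : g x - ρ / 2 * ‖y - x‖ ^ 2 ≤ g y := by
    have := hwc x y 0 hstat
    rw [inner_zero_left] at this
    linarith
  obtain ⟨xh, hxh, v, hv, hvn⟩ := exists_mem_limitingSubdiff_near hf hρ hδ hgx happrox
  refine ⟨xh, ?_, ?_⟩
  · rw [norm_sub_rev, ← Real.sqrt_mul (by positivity), div_mul_eq_mul_div]
    exact le_sqrt_div_of_mul_sq_le hρδ hxh
  · have hdist : Metric.infDist 0 (limitingSubdiff f xh) ≤ ‖v‖ := by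
      simpa using Metric.infDist_le_dist_of_mem (x := 0) hv
    have := two_mul_mul_le_of_mul_sq_le hρδ hδ.le (norm_nonneg _) (norm_nonneg _) hxh
    linarith

/-- If `g` is ρ-weakly convex and `|f - g| ≤ δ‖· - xb‖‖· + xb‖`, then near any stationary
point `x` of `g` there is a point `xh` at which `f` is approximately stationary. -/
theorem approximate_stationarity_transfer
    {d : ℕ} (f g : EuclideanSpace ℝ (Fin d) → ℝ)
    (hf : LowerSemicontinuous f) (hg : LowerSemicontinuous g)
    (ρ δ : ℝ) (hρ : 0 ≤ ρ) (hδ : 0 < δ)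
    (hwc : ∀ x y v, v ∈ limitingSubdiff g x →
      g y ≥ g x + ⟪v, y - x⟫_ℝ - ρ / 2 * ‖y - x‖ ^ 2)
    (xb : EuclideanSpace ℝ (Fin d))
    (happrox : ∀ y, |f y - g y| ≤ δ * ‖y - xb‖ * ‖y + xb‖)
    (x : EuclideanSpace ℝ (Fin d))
    (hstat : (0 : EuclideanSpace ℝ (Fin d)) ∈ limitingSubdiff g x) :
    ∃ xh : EuclideanSpace ℝ (Fin d),
      ‖x - xh‖ ≤ Real.sqrt (4 * δ / (ρ + 2 * δ)) * Real.sqrt (‖x - xb‖ * ‖x + xb‖) ∧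
      Metric.infDist 0 (limitingSubdiff f xh) ≤
        (δ + 2 * Real.sqrt (δ * (ρ + 2 * δ))) * (‖x - xb‖ + ‖x + xb‖) :=
  approximate_stationarity_transfer_general f g hf ρ δ hρ hδ hwc xb happrox x hstat
end

section
/- Let f: ℝ^d → ℝ be symmetric convex, g(x) = f_λ(xx^T - x̄x̄^T), and suppose g(x) - g(x̄) ≥ κ‖x-x̄‖‖x+x̄‖ for all x, with κ > 0. Then every x ≠ 0 satisfies κ‖x-x̄‖‖x+x̄‖/‖x‖ - (|λ₁(V)| + |λ_d(V)|)‖x̄‖²/‖x‖ ≤ dist(0, ∂g(x)), for any V ∈ ∂f_λ(X) attaining dist(0, ∂g(x)) = ‖Vx‖. -/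
/-!
As `f` is symmetric, `g(x) = f(λ(X))` for the eigenvalues `λ(X)` listed in the order fixed by `U`.
Sharpness at `x`, together with the subgradient inequality of `f` at `λ(X)` tested at
`λ(0) = 0`, gives `κ‖x - xb‖‖x + xb‖ ≤ g(x) - g(xb) ≤ ⟨λ(V), λ(X)⟩`. Since `U` diagonalises `V`
and `X` simultaneously, `⟨λ(V), λ(X)⟩ = tr (V X) = xᵀVx - xbᵀVxb`. Cauchy–Schwarz bounds the first
term by `‖x‖‖Vx‖` and the Rayleigh quotient bounds the second below by `λ_d(V)‖xb‖²`.
-/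

open scoped InnerProductSpace Matrix

/-- The matrix `X = x xᵀ - xb xbᵀ`. -/
def phaseMatrix {d : ℕ} (x xb : EuclideanSpace ℝ (Fin d)) : Matrix (Fin d) (Fin d) ℝ :=
  Matrix.of fun i j => x i * x j - xb i * xb j

theorem phaseMatrix_isHermitian {d : ℕ} (x xb : EuclideanSpace ℝ (Fin d)) :
    (phaseMatrix x xb).IsHermitian := by
  unfold Matrix.IsHermitian
  ext i j
  simp [phaseMatrix, Matrix.conjTranspose_apply, mul_comm]

/-- The spectral composite objective `g(x) = f(λ(x xᵀ - xb xbᵀ))`. -/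
noncomputable def spectralObj {d : ℕ} (f : (Fin d → ℝ) → ℝ)
    (xb : EuclideanSpace ℝ (Fin d)) (x : EuclideanSpace ℝ (Fin d)) : ℝ :=
  f ((phaseMatrix_isHermitian x xb).eigenvalues)

open List in
theorem Fin.exists_perm_comp_eq_of_map_univ_eq {d : ℕ} {α : Type*} [LinearOrder α]
    {e g : Fin d → α}
    (h : Multiset.map e Finset.univ.val = Multiset.map g Finset.univ.val) :
    ∃ σ : Equiv.Perm (Fin d), e ∘ σ = g := by
  have hperm : List.ofFn e ~ List.ofFn g := by
    simpa [Fin.univ_def, Multiset.map_coe, List.ofFn_eq_map] using h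
  have hsorted : e ∘ Tuple.sort e = g ∘ Tuple.sort g :=
    List.ofFn_inj.mp <| List.Perm.eq_of_sortedLE
      (List.sortedLE_ofFn_iff.mpr (Tuple.monotone_sort e))
      (List.sortedLE_ofFn_iff.mpr (Tuple.monotone_sort g))
      (((Tuple.sort e).ofFn_comp_perm e).trans
        (hperm.trans ((Tuple.sort g).ofFn_comp_perm g).symm))
  refine ⟨(Tuple.sort g).symm.trans (Tuple.sort e), funext fun i => ?_⟩
  simpa using congrFun hsorted ((Tuple.sort g).symm i)

namespace Matrix

theorem charpoly_conj_orthogonal {n R : Type*} [Fintype n] [DecidableEq n] [CommRing R]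
    {U : Matrix n n R} (hU : U ∈ orthogonalGroup n R) (A : Matrix n n R) :
    (U * A * Uᵀ).charpoly = A.charpoly := by
  rw [charpoly_mul_comm, ← Matrix.mul_assoc, (mem_orthogonalGroup_iff' n R).mp hU, Matrix.one_mul]

open Polynomial in
theorem IsHermitian.map_eigenvalues_eq_of_eq_conj_diagonal {n : Type*} [Fintype n]
    [DecidableEq n] {A U : Matrix n n ℝ} (hA : A.IsHermitian) (hU : U ∈ orthogonalGroup n ℝ)
    {l : n → ℝ} (h : A = U * diagonal l * Uᵀ) :
    Multiset.map hA.eigenvalues Finset.univ.val = Multiset.map l Finset.univ.val := by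
  have hchar :
      A.charpoly = (Multiset.map (fun a => X - C a) (Multiset.map l Finset.univ.val)).prod := by
    rw [h, charpoly_conj_orthogonal hU, charpoly_diagonal, Finset.prod_eq_multiset_prod,
      Multiset.map_map]
    rfl
  have := hA.roots_charpoly_eq_eigenvalues
  rw [hchar, roots_multiset_prod_X_sub_C] at this
  simpa using this.symm

theorem dotProduct_conj_diagonal_mulVec {n R : Type*} [Fintype n] [DecidableEq n] [CommRing R]
    (U : Matrix n n R) (l v : n → R) :
    v ⬝ᵥ (U * diagonal l * Uᵀ) *ᵥ v = ∑ i, l i * (Uᵀ *ᵥ v) i ^ 2 := by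
  rw [← mulVec_mulVec, ← mulVec_mulVec, dotProduct_mulVec, ← mulVec_transpose]
  simp only [dotProduct, mulVec_diagonal]
  exact Finset.sum_congr rfl fun i _ => by ring

theorem dotProduct_transpose_mulVec_self {n R : Type*} [Fintype n] [DecidableEq n] [CommRing R]
    {U : Matrix n n R} (hU : U ∈ orthogonalGroup n R) (v : n → R) :
    (Uᵀ *ᵥ v) ⬝ᵥ (Uᵀ *ᵥ v) = v ⬝ᵥ v := by
  rw [dotProduct_mulVec, vecMul_transpose, mulVec_mulVec, (mem_orthogonalGroup_iff n R).mp hU,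
    one_mulVec]

theorem iInf_mul_dotProduct_le_dotProduct_conj_diagonal_mulVec {n : Type*} [Fintype n]
    [DecidableEq n] {U : Matrix n n ℝ} (hU : U ∈ orthogonalGroup n ℝ) (l v : n → ℝ) :
    (⨅ i, l i) * (v ⬝ᵥ v) ≤ v ⬝ᵥ (U * diagonal l * Uᵀ) *ᵥ v := by
  rw [dotProduct_conj_diagonal_mulVec, ← dotProduct_transpose_mulVec_self hU, dotProduct,
    Finset.mul_sum]
  refine Finset.sum_le_sum fun i _ => ?_
  rw [← sq]
  exact mul_le_mul_of_nonneg_right (ciInf_le (Set.finite_range l).bddBelow i) (sq_nonneg _)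

theorem trace_conj_diagonal_mul_conj_diagonal {n R : Type*} [Fintype n] [DecidableEq n]
    [CommRing R] {U : Matrix n n R} (hU : U ∈ orthogonalGroup n R) (a b : n → R) :
    trace ((U * diagonal a * Uᵀ) * (U * diagonal b * Uᵀ)) = ∑ i, a i * b i := by
  have hU' := (mem_orthogonalGroup_iff' n R).mp hU
  calc trace ((U * diagonal a * Uᵀ) * (U * diagonal b * Uᵀ))
      = trace (U * (diagonal a * diagonal b) * Uᵀ) := by
        simp only [Matrix.mul_assoc]
        rw [← Matrix.mul_assoc Uᵀ U, hU', Matrix.one_mul]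
    _ = trace (diagonal a * diagonal b) := by
        rw [trace_mul_comm, ← Matrix.mul_assoc, hU', Matrix.one_mul]
    _ = ∑ i, a i * b i := by rw [diagonal_mul_diagonal, trace_diagonal]

end Matrix

open Matrix

theorem EuclideanSpace.dotProduct_mulVec_le_norm_mul_norm {n : Type*} [Fintype n]
    [DecidableEq n] (A : Matrix n n ℝ) (v : EuclideanSpace ℝ n) :
    v.ofLp ⬝ᵥ A *ᵥ v.ofLp ≤ ‖v‖ * ‖toEuclideanLin A v‖ := by
  have := real_inner_le_norm v (toEuclideanLin A v)
  rwa [EuclideanSpace.inner_eq_star_dotProduct, star_trivial, dotProduct_comm] at this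

theorem EuclideanSpace.dotProduct_self_eq_norm_sq {n : Type*} [Fintype n]
    (v : EuclideanSpace ℝ n) : v.ofLp ⬝ᵥ v.ofLp = ‖v‖ ^ 2 := by
  rw [EuclideanSpace.real_norm_sq_eq]
  simp [dotProduct, sq]

section PhaseMatrix

variable {d : ℕ}

theorem phaseMatrix_eq_sub_vecMulVec (x xb : EuclideanSpace ℝ (Fin d)) :
    phaseMatrix x xb = vecMulVec x.ofLp x.ofLp - vecMulVec xb.ofLp xb.ofLp := by
  ext i j
  simp [phaseMatrix, vecMulVec_apply]

theorem phaseMatrix_self (xb : EuclideanSpace ℝ (Fin d)) : phaseMatrix xb xb = 0 := by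
  simp [phaseMatrix_eq_sub_vecMulVec]

theorem trace_mul_phaseMatrix (V : Matrix (Fin d) (Fin d) ℝ) (x xb : EuclideanSpace ℝ (Fin d)) :
    trace (V * phaseMatrix x xb) = x.ofLp ⬝ᵥ V *ᵥ x.ofLp - xb.ofLp ⬝ᵥ V *ᵥ xb.ofLp := by
  simp [phaseMatrix_eq_sub_vecMulVec, mul_sub, mul_vecMulVec, dotProduct_comm]

theorem spectralObj_self (f : (Fin d → ℝ) → ℝ) (xb : EuclideanSpace ℝ (Fin d)) :
    spectralObj f xb xb = f 0 := by
  rw [spectralObj,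
    (phaseMatrix_isHermitian xb xb).eigenvalues_eq_zero_iff.mpr (phaseMatrix_self xb)]

theorem spectralObj_eq_of_phaseMatrix_eq_conj_diagonal {f : (Fin d → ℝ) → ℝ}
    (hsymm : ∀ σ : Equiv.Perm (Fin d), ∀ z : Fin d → ℝ, f (z ∘ σ) = f z)
    {x xb : EuclideanSpace ℝ (Fin d)} {U : Matrix (Fin d) (Fin d) ℝ}
    (hU : U ∈ orthogonalGroup (Fin d) ℝ) {l : Fin d → ℝ}
    (h : phaseMatrix x xb = U * diagonal l * Uᵀ) :
    spectralObj f xb x = f l := by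
  obtain ⟨σ, hσ⟩ := Fin.exists_perm_comp_eq_of_map_univ_eq <|
    (phaseMatrix_isHermitian x xb).map_eigenvalues_eq_of_eq_conj_diagonal hU h
  rw [spectralObj, ← hsymm σ, hσ]

end PhaseMatrix

theorem spectral_subgradient_norm_lower_bound_general {d : ℕ}
    (f : (Fin d → ℝ) → ℝ)
    (hsymm : ∀ σ : Equiv.Perm (Fin d), ∀ z : Fin d → ℝ, f (z ∘ σ) = f z)
    (xb : EuclideanSpace ℝ (Fin d)) (κ : ℝ)
    (hsharp : ∀ y, spectralObj f xb y - spectralObj f xb xb ≥ κ * ‖y - xb‖ * ‖y + xb‖)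
    (x : EuclideanSpace ℝ (Fin d))
    (U : Matrix (Fin d) (Fin d) ℝ) (hU : U ∈ Matrix.orthogonalGroup (Fin d) ℝ)
    (lX lV : Fin d → ℝ)
    (hdecX : phaseMatrix x xb = U * Matrix.diagonal lX * Uᵀ)
    (V : Matrix (Fin d) (Fin d) ℝ) (hdecV : V = U * Matrix.diagonal lV * Uᵀ)
    (hsub : ∀ z : Fin d → ℝ, f z ≥ f lX + ∑ i, lV i * (z i - lX i)) :
    κ * ‖x - xb‖ * ‖x + xb‖ / ‖x‖ - (|⨆ i, lV i| + |⨅ i, lV i|) * ‖xb‖ ^ 2 / ‖x‖ ≤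
      ‖Matrix.toEuclideanLin V x‖ := by
  have hgap : κ * ‖x - xb‖ * ‖x + xb‖ ≤ ∑ i, lV i * lX i := by
    have hsub0 := hsub 0
    simp only [Pi.zero_apply, zero_sub, mul_neg, Finset.sum_neg_distrib] at hsub0
    have hsharpx := hsharp x
    rw [spectralObj_eq_of_phaseMatrix_eq_conj_diagonal hsymm hU hdecX, spectralObj_self] at hsharpx
    linarith
  have htrace : ∑ i, lV i * lX i = x.ofLp ⬝ᵥ V *ᵥ x.ofLp - xb.ofLp ⬝ᵥ V *ᵥ xb.ofLp := by
    rw [← trace_conj_diagonal_mul_conj_diagonal hU, ← hdecV, ← hdecX, trace_mul_phaseMatrix]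
  have hxVx := EuclideanSpace.dotProduct_mulVec_le_norm_mul_norm V x
  have hxbVxb := iInf_mul_dotProduct_le_dotProduct_conj_diagonal_mulVec hU lV xb.ofLp
  rw [← hdecV, EuclideanSpace.dotProduct_self_eq_norm_sq] at hxbVxb
  have hinf : -(⨅ i, lV i) ≤ |⨆ i, lV i| + |⨅ i, lV i| :=
    (neg_le_abs _).trans (le_add_of_nonneg_left (abs_nonneg _))
  have hxbS := mul_le_mul_of_nonneg_right hinf (sq_nonneg ‖xb‖)
  rw [div_sub_div_same]
  exact div_le_of_le_mul₀ (norm_nonneg _) (norm_nonneg _) (by linarith)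

/-- If `g = f_λ(x xᵀ - xb xbᵀ)` is sharp with constant `κ`, then every `x ≠ 0` and every
`V ∈ ∂f_λ(X)` (presented by a simultaneous ordered spectral decomposition with `X` and a
convex subgradient inclusion `λ(V) ∈ ∂f(λ(X))`) satisfy
`κ‖x-xb‖‖x+xb‖/‖x‖ - (|λ₁(V)| + |λ_d(V)|)‖xb‖²/‖x‖ ≤ ‖Vx‖`. -/
theorem spectral_subgradient_norm_lower_bound {d : ℕ} (hd : 0 < d)
    (f : (Fin d → ℝ) → ℝ) (hconv : ConvexOn ℝ Set.univ f)
    (hsymm : ∀ σ : Equiv.Perm (Fin d), ∀ z : Fin d → ℝ, f (z ∘ σ) = f z)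
    (xb : EuclideanSpace ℝ (Fin d)) (κ : ℝ) (hκ : 0 < κ)
    (hsharp : ∀ y, spectralObj f xb y - spectralObj f xb xb ≥ κ * ‖y - xb‖ * ‖y + xb‖)
    (x : EuclideanSpace ℝ (Fin d)) (hx : x ≠ 0)
    (U : Matrix (Fin d) (Fin d) ℝ) (hU : U ∈ Matrix.orthogonalGroup (Fin d) ℝ)
    (lX lV : Fin d → ℝ) (hlX : Antitone lX) (hlV : Antitone lV)
    (hdecX : phaseMatrix x xb = U * Matrix.diagonal lX * Uᵀ)
    (V : Matrix (Fin d) (Fin d) ℝ) (hdecV : V = U * Matrix.diagonal lV * Uᵀ)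
    (hsub : ∀ z : Fin d → ℝ, f z ≥ f lX + ∑ i, lV i * (z i - lX i)) :
    κ * ‖x - xb‖ * ‖x + xb‖ / ‖x‖ - (|⨆ i, lV i| + |⨅ i, lV i|) * ‖xb‖ ^ 2 / ‖x‖ ≤
      ‖Matrix.toEuclideanLin V x‖ :=
  spectral_subgradient_norm_lower_bound_general f hsymm xb κ hsharp x U hU lX lV hdecX V hdecV hsub
end
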